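/- Let f be a convex (or concave), continuous and strictly monotone function on a nontrivial bounded interval [a,b], with nonzero right derivative f'_r(a) at a and nonzero left derivative f'_l(b) at b, and let ℓ_f be the chord of f on [a,b]. Then ∫_a^b |f - ℓ_f| dμ ≤ ((f(b)-f(a))²/8)·|1/f'_r(a) - 1/f'_l(b)| (with the convention 1/(±∞) = 0). -/

import Mathlib

/-!
Reduce to the convex case by passing to `-f`. A convex `f` lies below its chord and above its
tangent lines at `a` and `b` (slopes `f'(a) ≤ s ≤ f'(b)`, `s` the chord slope), so the gap
`ℓ_f - f` is dominated by the tent `min((s - f'(a))(x - a), (f'(b) - s)(b - x))`, whose integral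
is the area `p q (b - a)² / (2 (p + q))` of the triangle cut off by the two tangents, with
`p = s - f'(a)`, `q = f'(b) - s`. Monotonicity makes `f'(a) f'(b) > 0`, and then AM-GM bounds
this area by `s² (b - a)² (f'(b) - f'(a)) / (8 f'(a) f'(b))`, which is the claim.
-/

open Set Filter MeasureTheory

section ConvexOnInterval

variable {f : ℝ → ℝ} {a b x fa' fb' : ℝ}

lemma ConvexOn.le_chord (hf : ConvexOn ℝ (Icc a b) f) (hx : x ∈ Icc a b) :
    f x ≤ f a + (f b - f a) / (b - a) * (x - a) := by
  rcases hx.1.eq_or_lt with rfl | hax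
  · simp
  rcases hx.2.eq_or_lt with rfl | hxb
  · rw [div_mul_cancel₀ _ (sub_ne_zero.2 hax.ne')]
    linarith
  have key := hf.secant_mono_aux1 (left_mem_Icc.2 (hax.trans hxb).le)
    (right_mem_Icc.2 (hax.trans hxb).le) hax hxb
  have hba : 0 < b - a := by linarith
  rw [div_mul_eq_mul_div, ← sub_le_iff_le_add', le_div_iff₀ hba]
  linarith

lemma ConvexOn.tangent_le_of_hasDerivWithinAt_Ici (hf : ConvexOn ℝ (Icc a b) f)
    (ha : HasDerivWithinAt f fa' (Ici a) a) (hx : x ∈ Icc a b) :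
    f a + fa' * (x - a) ≤ f x := by
  rcases hx.1.eq_or_lt with rfl | hax
  · simp
  have h := hf.le_slope_of_hasDerivWithinAt_Ioi (left_mem_Icc.2 (hax.le.trans hx.2)) hx hax
    (ha.mono Ioi_subset_Ici_self)
  rw [slope_def_field, le_div_iff₀ (sub_pos.2 hax)] at h
  linarith

lemma ConvexOn.tangent_le_of_hasDerivWithinAt_Iic (hf : ConvexOn ℝ (Icc a b) f)
    (hb : HasDerivWithinAt f fb' (Iic b) b) (hx : x ∈ Icc a b) :
    f b + fb' * (x - b) ≤ f x := by
  rcases hx.2.eq_or_lt with rfl | hxb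
  · simp
  have h := hf.slope_le_of_hasDerivWithinAt_Iio hx (right_mem_Icc.2 (hx.1.trans hxb.le)) hxb
    (hb.mono Iio_subset_Iic_self)
  rw [slope_def_field, div_le_iff₀ (sub_pos.2 hxb)] at h
  linarith

end ConvexOnInterval

lemma integral_le_of_le_tent {g : ℝ → ℝ} {a b c p q : ℝ} (hac : a ≤ c) (hcb : c ≤ b)
    (hg : IntervalIntegrable g volume a b)
    (hga : ∀ x ∈ Icc a c, g x ≤ p * (x - a)) (hgb : ∀ x ∈ Icc c b, g x ≤ q * (b - x)) :
    ∫ x in a..b, g x ≤ p * (c - a) ^ 2 / 2 + q * (b - c) ^ 2 / 2 := by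
  have hsub : uIcc a c ⊆ uIcc a b ∧ uIcc c b ⊆ uIcc a b := by
    simp only [uIcc_of_le hac, uIcc_of_le hcb, uIcc_of_le (hac.trans hcb)]
    exact ⟨Icc_subset_Icc le_rfl hcb, Icc_subset_Icc hac le_rfl⟩
  rw [← intervalIntegral.integral_add_adjacent_intervals (hg.mono_set hsub.1) (hg.mono_set hsub.2)]
  have h₁ : ∫ x in a..c, g x ≤ ∫ x in a..c, p * (x - a) :=
    intervalIntegral.integral_mono_on hac (hg.mono_set hsub.1)
      ((by fun_prop : Continuous _).intervalIntegrable _ _) hga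
  have h₂ : ∫ x in c..b, g x ≤ ∫ x in c..b, q * (b - x) :=
    intervalIntegral.integral_mono_on hcb (hg.mono_set hsub.2)
      ((by fun_prop : Continuous _).intervalIntegrable _ _) hgb
  have e₁ : ∫ x in a..c, p * (x - a) = p * (c - a) ^ 2 / 2 := by
    simp only [intervalIntegral.integral_const_mul,
      intervalIntegral.integral_comp_sub_right (fun x => x), integral_id]
    ring
  have e₂ : ∫ x in c..b, q * (b - x) = q * (b - c) ^ 2 / 2 := by
    simp only [intervalIntegral.integral_const_mul,
      intervalIntegral.integral_comp_sub_left (fun x => x), integral_id]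
    ring
  linarith

lemma exists_tent_area_le {a b s fa' fb' : ℝ} (hab : a ≤ b) (hsa : fa' ≤ s) (hsb : s ≤ fb')
    (hprod : 0 < fa' * fb') :
    ∃ c ∈ Icc a b, (s - fa') * (c - a) ^ 2 / 2 + (fb' - s) * (b - c) ^ 2 / 2
      ≤ (s * (b - a)) ^ 2 / 8 * |1 / fa' - 1 / fb'| := by
  rcases (hsa.trans hsb).eq_or_lt with heq | hlt
  · refine ⟨a, left_mem_Icc.2 hab, ?_⟩
    subst heq
    obtain rfl : s = fa' := le_antisymm hsb hsa
    simp only [sub_self, zero_mul, zero_div, add_zero]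
    positivity
  have hd : 0 < fb' - fa' := sub_pos.2 hlt
  have hba : 0 ≤ b - a := sub_nonneg.2 hab
  refine ⟨a + (fb' - s) * (b - a) / (fb' - fa'), ⟨?_, ?_⟩, ?_⟩
  · have : 0 ≤ (fb' - s) * (b - a) / (fb' - fa') :=
      div_nonneg (mul_nonneg (sub_nonneg.2 hsb) hba) hd.le
    linarith
  · rw [← le_sub_iff_add_le', div_le_iff₀ hd]
    nlinarith
  have hinv : |1 / fa' - 1 / fb'| = (fb' - fa') / (fa' * fb') := by
    rw [div_sub_div _ _ (left_ne_zero_of_mul hprod.ne') (right_ne_zero_of_mul hprod.ne')]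
    rw [one_mul, mul_one]
    exact abs_of_nonneg (div_nonneg hd.le hprod.le)
  -- AM-GM for `fb' * (s - fa')` and `fa' * (fb' - s)`, whose sum is `s * (fb' - fa')`
  have amgm : 4 * (fa' * fb') * ((s - fa') * (fb' - s)) ≤ (s * (fb' - fa')) ^ 2 := by
    nlinarith [sq_nonneg (fb' * (s - fa') - fa' * (fb' - s))]
  calc (s - fa') * (a + (fb' - s) * (b - a) / (fb' - fa') - a) ^ 2 / 2
        + (fb' - s) * (b - (a + (fb' - s) * (b - a) / (fb' - fa'))) ^ 2 / 2
      = (s - fa') * (fb' - s) * (b - a) ^ 2 / (2 * (fb' - fa')) := by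
        field_simp; ring
    _ ≤ (s * (fb' - fa')) ^ 2 * (b - a) ^ 2 / (8 * (fa' * fb') * (fb' - fa')) := by
        rw [div_le_div_iff₀ (by positivity) (by positivity)]
        nlinarith [mul_le_mul_of_nonneg_right amgm (sq_nonneg (b - a))]
    _ = (s * (b - a)) ^ 2 / 8 * |1 / fa' - 1 / fb'| := by
        rw [hinv]; field_simp

section ChordDeviation

variable {f : ℝ → ℝ} {a b fa' fb' : ℝ}

theorem ConvexOn.integral_abs_sub_chord_le (hab : a < b) (hf : ConvexOn ℝ (Icc a b) f)
    (hfi : IntervalIntegrable f volume a b)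
    (ha : HasDerivWithinAt f fa' (Ici a) a) (hb : HasDerivWithinAt f fb' (Iic b) b)
    (hprod : 0 < fa' * fb') :
    ∫ x in a..b, |f x - (f a + (f b - f a) / (b - a) * (x - a))|
      ≤ (f b - f a) ^ 2 / 8 * |1 / fa' - 1 / fb'| := by
  set s := (f b - f a) / (b - a)
  have hab' : a ∈ Icc a b ∧ b ∈ Icc a b := ⟨left_mem_Icc.2 hab.le, right_mem_Icc.2 hab.le⟩
  have hsa : fa' ≤ s := by
    simpa only [slope_def_field] using
      hf.le_slope_of_hasDerivWithinAt_Ioi hab'.1 hab'.2 hab (ha.mono Ioi_subset_Ici_self)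
  have hsb : s ≤ fb' := by
    simpa only [slope_def_field] using
      hf.slope_le_of_hasDerivWithinAt_Iio hab'.1 hab'.2 hab (hb.mono Iio_subset_Iic_self)
  have hfab : f b - f a = s * (b - a) := by
    rw [div_mul_cancel₀ _ (sub_pos.2 hab).ne']
  have hgap : ∀ x ∈ Icc a b, |f x - (f a + s * (x - a))| = f a + s * (x - a) - f x :=
    fun x hx => by rw [abs_sub_comm, abs_of_nonneg (sub_nonneg.2 (hf.le_chord hx))]
  obtain ⟨c, hc, hcs⟩ := exists_tent_area_le hab.le hsa hsb hprod
  rw [hfab]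
  refine (integral_le_of_le_tent hc.1 hc.2 ?_ (fun x hx => ?_) (fun x hx => ?_)).trans hcs
  · exact (hfi.sub ((by fun_prop : Continuous _).intervalIntegrable _ _)).abs
  · have hx' : x ∈ Icc a b := ⟨hx.1, hx.2.trans hc.2⟩
    rw [hgap x hx']
    linarith [hf.tangent_le_of_hasDerivWithinAt_Ici ha hx']
  · have hx' : x ∈ Icc a b := ⟨hc.1.trans hx.1, hx.2⟩
    rw [hgap x hx']
    linarith [hf.tangent_le_of_hasDerivWithinAt_Iic hb hx']

theorem ConcaveOn.integral_abs_sub_chord_le (hab : a < b) (hf : ConcaveOn ℝ (Icc a b) f)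
    (hfi : IntervalIntegrable f volume a b)
    (ha : HasDerivWithinAt f fa' (Ici a) a) (hb : HasDerivWithinAt f fb' (Iic b) b)
    (hprod : 0 < fa' * fb') :
    ∫ x in a..b, |f x - (f a + (f b - f a) / (b - a) * (x - a))|
      ≤ (f b - f a) ^ 2 / 8 * |1 / fa' - 1 / fb'| := by
  have h := hf.neg.integral_abs_sub_chord_le hab hfi.neg ha.neg hb.neg (by rwa [neg_mul_neg])
  convert h using 1
  · congr 1 with x
    rw [← abs_neg]
    simp only [Pi.neg_apply]
    ring_nf
  · rw [← abs_neg]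
    simp only [Pi.neg_apply]
    ring_nf

lemma mul_pos_of_hasDerivWithinAt_Ici_Iic (hab : a < b)
    (hmono : MonotoneOn f (Icc a b) ∨ AntitoneOn f (Icc a b)) (ha' : fa' ≠ 0) (hb' : fb' ≠ 0)
    (ha : HasDerivWithinAt f fa' (Ici a) a) (hb : HasDerivWithinAt f fb' (Iic b) b) :
    0 < fa' * fb' := by
  have hacc_a : AccPt a (𝓟 (Icc a b)) := by
    rw [accPt_principal_iff_nhdsWithin, Icc_sdiff_left]
    exact left_nhdsWithin_Ioc_neBot hab
  have hacc_b : AccPt b (𝓟 (Icc a b)) := by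
    rw [accPt_principal_iff_nhdsWithin, Icc_sdiff_right]
    exact right_nhdsWithin_Ico_neBot hab
  have ha₁ : HasDerivWithinAt f fa' (Icc a b) a := ha.mono Icc_subset_Ici_self
  have hb₁ : HasDerivWithinAt f fb' (Icc a b) b := hb.mono Icc_subset_Iic_self
  rcases hmono with hm | hm
  · exact mul_pos ((ha₁.nonneg_of_monotoneOn hacc_a hm).lt_of_ne' ha')
      ((hb₁.nonneg_of_monotoneOn hacc_b hm).lt_of_ne' hb')
  · exact mul_pos_of_neg_of_neg ((ha₁.nonpos_of_antitoneOn hacc_a hm).lt_of_ne ha')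
      ((hb₁.nonpos_of_antitoneOn hacc_b hm).lt_of_ne hb')

end ChordDeviation

theorem stmt8 (a b : ℝ) (hab : a < b) (f : ℝ → ℝ)
    (hcont : ContinuousOn f (Set.Icc a b))
    (hcc : ConvexOn ℝ (Set.Icc a b) f ∨ ConcaveOn ℝ (Set.Icc a b) f)
    (hmono : StrictMonoOn f (Set.Icc a b) ∨ StrictAntiOn f (Set.Icc a b))
    (fa' fb' : ℝ) (ha' : fa' ≠ 0) (hb' : fb' ≠ 0)
    (ha : HasDerivWithinAt f fa' (Set.Ici a) a)
    (hb : HasDerivWithinAt f fb' (Set.Iic b) b) :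
    ∫ x in a..b, |f x - (f a + (f b - f a) / (b - a) * (x - a))|
      ≤ (f b - f a) ^ 2 / 8 * |1 / fa' - 1 / fb'| := by
  have hfi : IntervalIntegrable f volume a b := hcont.intervalIntegrable_of_Icc hab.le
  have hprod : 0 < fa' * fb' := mul_pos_of_hasDerivWithinAt_Ici_Iic hab
    (hmono.imp StrictMonoOn.monotoneOn StrictAntiOn.antitoneOn) ha' hb' ha hb
  rcases hcc with hconv | hconc
  · exact hconv.integral_abs_sub_chord_le hab hfi ha hb hprod
  · exact hconc.integral_abs_sub_chord_le hab hfi ha hb hprod
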